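/- For all integers s and t with 1 ≤ s ≤ t − 2, the polynomial w₂^{2^{t+1}−3·2^s−1} + w₂^{2^{t−1}−1}·w₃^{2^t−2^{s+1}} + w₂^{2^t−2^{s+1}−2^{s−1}}·g_{2^{t+1}−2^s−2} belongs to w₃I_{2^{t+1}−2^s}. -/
import Mathlib


open MvPolynomial Finset

noncomputable section

/-- `R2 = (ℤ/2)[w₂, w₃]`, the polynomial ring in two variables over `ℤ/2ℤ`. -/
abbrev R2 : Type := MvPolynomial (Fin 2) (ZMod 2)

/-- The variable `w₂`. -/
def w2 : R2 := X 0

/-- The variable `w₃`. -/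
def w3 : R2 := X 1

/-- The polynomials `g_r`: `g₀ = 1`, `g₁ = 0`, `g₂ = w₂`,
`g_{r+3} = w₂ g_{r+1} + w₃ g_r`. -/
def g : ℕ → R2
  | 0 => 1
  | 1 => 0
  | 2 => w2
  | (r+3) => w2 * g (r+1) + w3 * g r

/-- The ideal `I_n = (g_{n-2}, g_{n-1}, g_n)`. -/
def I (n : ℕ) : Ideal R2 := Ideal.span {g (n-2), g (n-1), g n}

lemma two0 : (2 : R2) = 0 := CharTwo.two_eq_zero

lemma g0 : g 0 = 1 := rfl
lemma g1 : g 1 = 0 := rfl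
lemma g2 : g 2 = w2 := rfl
lemma grec (r : ℕ) : g (r+3) = w2 * g (r+1) + w3 * g r := rfl

lemma g3 : g 3 = w3 := by show g (0+3) = w3; rw [grec, g0, g1]; ring
lemma g4 : g 4 = w2^2 := by show g (1+3) = w2^2; rw [grec, g1, g2]; ring
lemma g6 : g 6 = w2^3 + w3^2 := by
  show g (3+3) = _; rw [grec, g4, g3]; ring

lemma dbl (m : ℕ) : g (2*m+2) = (g (m+1))^2 + w2 * (g m)^2 ∧
    g (2*m+3) = w3 * (g m)^2 := by
  induction m using Nat.strong_induction_on with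
  | _ m ih =>
    rcases m with _ | _ | m
    · constructor
      · show g 2 = (g 1)^2 + w2 * (g 0)^2
        rw [g2, g1, g0]; ring
      · show g 3 = w3 * (g 0)^2
        rw [g3, g0]; ring
    · constructor
      · show g 4 = (g 2)^2 + w2 * (g 1)^2
        rw [g4, g2, g1]; ring
      · show g (2+3) = w3 * (g 1)^2
        rw [grec, g3, g2, g1]
        linear_combination (w2*w3) * two0
    · have ih1 := ih (m+1) (by omega)
      have ih0 := ih m (by omega)
      have e1 : 2*(m+2)+2 = (2*m+3)+3 := by ring
      have e2 : 2*(m+2)+3 = (2*m+4)+3 := by ring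
      have e3 : 2*m+4 = 2*(m+1)+2 := by ring
      have e4 : 2*m+5 = 2*(m+1)+3 := by ring
      constructor
      · rw [e1, grec, show (2*m+3)+1 = 2*(m+1)+2 by ring, ih1.1,
          show 2*m+3 = 2*m+3 from rfl, ih0.2,
          show (m+2)+1 = m+3 from rfl, show m+3 = (m)+3 from rfl, grec]
        rw [CharTwo.add_sq]
        ring_nf
      · rw [e2, grec, show (2*m+4)+1 = 2*(m+1)+3 by ring, ih1.2, e3, ih1.1]
        linear_combination (w2*w3*(g (m+1))^2) * two0

lemma dbl1 (m : ℕ) : g (2*m+2) = (g (m+1))^2 + w2 * (g m)^2 := (dbl m).1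
lemma dbl2 (m : ℕ) : g (2*m+3) = w3 * (g m)^2 := (dbl m).2

/-- zeros of the sequence: g (2^(j+2) - 3) = 0 -/
lemma gzero (j : ℕ) : g (2^(j+2) - 3) = 0 := by
  induction j with
  | zero => exact g1
  | succ j ih =>
    have h4 : (4:ℕ) ≤ 2^(j+2) := by
      calc (4:ℕ) = 2^2 := rfl
      _ ≤ 2^(j+2) := Nat.pow_le_pow_right (by norm_num) (by omega)
    have e : 2^(j+3) - 3 = 2*(2^(j+2)-3)+3 := by
      have : 2^(j+3) = 2*2^(j+2) := by rw [pow_succ]; ring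
      omega
    rw [e, dbl2, ih]; ring

lemma gen_mem (n : ℕ) : g (n-2) ∈ I n ∧ g (n-1) ∈ I n ∧ g n ∈ I n := by
  refine ⟨?_, ?_, ?_⟩ <;> exact Ideal.subset_span (by simp)

lemma memI {n k : ℕ} (hn : 2 ≤ n) (hk : n - 2 ≤ k) : g k ∈ I n := by
  have aux : ∀ j, g (n-2+j) ∈ I n := by
    intro j
    induction j using Nat.strong_induction_on with
    | _ j ih =>
      match j with
      | 0 => simpa using (gen_mem n).1
      | 1 => rw [show n-2+1 = n-1 by omega]; exact (gen_mem n).2.1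
      | 2 => rw [show n-2+2 = n by omega]; exact (gen_mem n).2.2
      | (j+3) =>
        rw [show n-2+(j+3) = (n-2+j)+3 by ring, grec]
        exact Ideal.add_mem _
          (Ideal.mul_mem_left _ _ (by rw [show n-2+j+1 = n-2+(j+1) by ring]; exact ih (j+1) (by omega)))
          (Ideal.mul_mem_left _ _ (ih j (by omega)))
  have := aux (k - (n-2))
  rwa [show n-2+(k-(n-2)) = k by omega] at this

lemma fro_aux {n n' : ℕ} (hn' : 2 ≤ n')
    (h1 : w3 * (g (n-2))^2 ∈ I n') (h2 : w3 * (g (n-1))^2 ∈ I n')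
    (h3 : w3 * (g n)^2 ∈ I n') {q : R2} (hq : q ∈ I n) :
    w3 * q^2 ∈ I n' := by
  refine Submodule.span_induction ?_ ?_ ?_ ?_ hq
  · rintro x (rfl | rfl | rfl)
    · exact h1
    · exact h2
    · exact h3
  · simpa using (I n').zero_mem
  · intro x y _ _ hx hy
    have e : w3 * (x+y)^2 = w3*x^2 + w3*y^2 := by
      rw [CharTwo.add_sq]; ring
    rw [e]; exact Ideal.add_mem _ hx hy
  · intro r x _ hx
    have e : w3 * (r • x)^2 = r^2 * (w3 * x^2) := by
      simp [smul_eq_mul]; ring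
    rw [e]; exact Ideal.mul_mem_left _ _ hx

lemma fro {n : ℕ} (hn : 2 ≤ n) {q : R2} (hq : q ∈ I n) :
    w3 * q^2 ∈ I (2*n) := by
  refine fro_aux (by omega) ?_ ?_ ?_ hq
  · rw [show w3 * (g (n-2))^2 = g (2*(n-2)+3) from (dbl2 _).symm,
      show 2*(n-2)+3 = 2*n-1 by omega]
    exact memI (by omega) (by omega)
  · rw [show w3 * (g (n-1))^2 = g (2*(n-1)+3) from (dbl2 _).symm,
      show 2*(n-1)+3 = 2*n+1 by omega]
    exact memI (by omega) (by omega)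
  · rw [show w3 * (g n)^2 = g (2*n+3) from (dbl2 _).symm]
    exact memI (by omega) (by omega)

lemma fro2 {τ : ℕ} (hτ : 2 ≤ τ) {q : R2} (hq : q ∈ I (2^τ - 1)) :
    w3 * q^2 ∈ I (2^(τ+1) - 1) := by
  have h4 : (4:ℕ) ≤ 2^τ := by
    calc (4:ℕ) = 2^2 := rfl
    _ ≤ 2^τ := Nat.pow_le_pow_right (by norm_num) hτ
  have hp : 2^(τ+1) = 2*2^τ := by rw [pow_succ]; ring
  refine fro_aux (by omega) ?_ ?_ ?_ hq
  · have hz := gzero (τ-2)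
    rw [show τ-2+2 = τ by omega] at hz
    rw [show 2^τ-1-2 = 2^τ-3 by omega, hz]
    simpa using (I _).zero_mem
  · rw [show 2^τ-1-1 = 2^τ-2 by omega,
      show w3 * (g (2^τ-2))^2 = g (2*(2^τ-2)+3) from (dbl2 _).symm,
      show 2*(2^τ-2)+3 = 2^(τ+1)-1 by omega]
    exact (gen_mem _).2.2
  · rw [show w3 * (g (2^τ-1))^2 = g (2*(2^τ-1)+3) from (dbl2 _).symm,
      show 2*(2^τ-1)+3 = (2^(τ+1)-1)+2 by omega]
    exact memI (by omega) (by omega)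

/-- key square identity: w2^2 * g k ^4 = g(2k+2)^2 + g(k+1)^4 -/
lemma sqid (k : ℕ) : w2^2 * (g k)^4 = (g (2*k+2))^2 + (g (k+1))^4 := by
  rw [dbl1, CharTwo.add_sq]
  rw [mul_pow]
  linear_combination (-((g (k+1))^4)) * two0

lemma up {n : ℕ} (hn : 2 ≤ n) : ∀ j k, n ≤ 4*k+9 →
    w3 * (g (k+j))^4 ∈ I n → w3 * w2^(2*j) * (g k)^4 ∈ I n := by
  intro j
  induction j with
  | zero => intro k _ h; simpa using h
  | succ j ih =>
    intro k hk h
    have e : w3 * w2^(2*(j+1)) * (g k)^4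
        = w2^(2*j) * g (4*k+7) + w2^(2*j) * (w3 * (g (k+1))^4) := by
      rw [show (4*k+7) = 2*(2*k+2)+3 by ring, dbl2]
      have := sqid k
      calc w3 * w2^(2*(j+1)) * (g k)^4 = w2^(2*j) * (w3 * (w2^2 * (g k)^4)) := by ring
      _ = w2^(2*j) * (w3 * ((g (2*k+2))^2 + (g (k+1))^4)) := by rw [this]
      _ = _ := by ring
    rw [e]
    refine Ideal.add_mem _ (Ideal.mul_mem_left _ _ (memI hn (by omega))) ?_
    have hmem := ih (k+1) (by omega) (by rwa [show k+1+j = k+(j+1) by ring])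
    have e2 : w2^(2*j) * (w3 * (g (k+1))^4) = w3 * w2^(2*j) * (g (k+1))^4 := by ring
    rw [e2]; exact hmem

lemma down {n : ℕ} (hn : 2 ≤ n) : ∀ j k, n ≤ 4*k+9 →
    w3 * (g k)^4 ∈ I n → w3 * (g (k+j))^4 ∈ I n := by
  intro j
  induction j with
  | zero => intro k _ h; simpa using h
  | succ j ih =>
    intro k hk h
    have hkj := ih k hk h
    have e : w3 * (g (k+(j+1)))^4 = g (4*(k+j)+7) + w2^2 * (w3 * (g (k+j))^4) := by
      rw [show k+(j+1) = (k+j)+1 from rfl,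
        show (4*(k+j)+7) = 2*(2*(k+j)+2)+3 by ring, dbl2]
      linear_combination (-w3) * (sqid (k+j)) + (-(w3*(g (2*(k+j)+2))^2)) * two0
    rw [e]
    exact Ideal.add_mem _ (memI hn (by omega)) (Ideal.mul_mem_left _ _ hkj)

/-- h-recursion: g(2^(j+2)-2) = w2 * g(2^(j+1)-2)^2 + w3^2 * g(2^j-2)^4 -/
lemma hrec (j : ℕ) (hj : 1 ≤ j) :
    g (2^(j+2)-2) = w2 * (g (2^(j+1)-2))^2 + w3^2 * (g (2^j-2))^4 := by
  have p1 : (2:ℕ) ≤ 2^j := by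
    calc (2:ℕ) = 2^1 := rfl
    _ ≤ 2^j := Nat.pow_le_pow_right (by norm_num) hj
  have p2 : 2^(j+1) = 2*2^j := by rw [pow_succ]; ring
  have p3 : 2^(j+2) = 4*2^j := by rw [pow_succ, pow_succ]; ring
  have e1 : 2^(j+2)-2 = 2*(2^(j+1)-2)+2 := by omega
  have e2 : (2^(j+1)-2)+1 = 2*(2^j-2)+3 := by omega
  rw [e1, dbl1, e2, dbl2]
  ring

/-- powered h-recursion -/
lemma hp (j i : ℕ) (hj : 1 ≤ j) :
    (g (2^(j+2)-2))^(2^i) = w2^(2^i) * (g (2^(j+1)-2))^(2^(i+1))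
      + w3^(2^(i+1)) * (g (2^j-2))^(2^(i+2)) := by
  have e1 : (2:ℕ)^(i+1) = 2*2^i := by rw [pow_succ]; ring
  have e2 : (2:ℕ)^(i+2) = 4*2^i := by rw [pow_succ, pow_succ]; ring
  rw [hrec j hj, add_pow_char_pow, mul_pow, mul_pow, ← pow_mul, ← pow_mul, ← pow_mul,
    ← e1, ← e2]

/-- the W-chain lemma -/
lemma wc (τ : ℕ) : ∀ k, 1 ≤ k → k+1 ≤ τ →
    w3^(2^k-1) * (g (2^(τ+1-k)-2))^(2^k) ∈ I (2^(τ+1)-1) := by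
  intro k
  induction k using Nat.strong_induction_on with
  | _ k ih =>
    rcases k with _ | _ | _ | K
    · omega
    · -- k = 1
      intro _ hτ
      have p1 : (2:ℕ) ≤ 2^τ := by
        calc (2:ℕ) = 2^1 := rfl
        _ ≤ 2^τ := Nat.pow_le_pow_right (by norm_num) (by omega)
      have p2 : 2^(τ+1) = 2*2^τ := by rw [pow_succ]; ring
      have e : w3^(2^1-1) * (g (2^(τ+1-1)-2))^(2^1) = g (2^(τ+1)-1) := by
        rw [show τ+1-1 = τ by omega, show 2^(τ+1)-1 = 2*(2^τ-2)+3 by omega, dbl2]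
        norm_num
      rw [e]
      exact (gen_mem _).2.2
    · -- k = 2
      intro _ hτ
      have hr := hrec (τ-1) (by omega)
      rw [show τ-1+2 = τ+1 by omega, show τ-1+1 = τ by omega] at hr
      have e : w3^(2^2-1) * (g (2^(τ+1-2)-2))^(2^2)
          = w3 * g (2^(τ+1)-2) + w2 * (w3 * (g (2^τ-2))^2) := by
        rw [show τ+1-2 = τ-1 by omega]
        have : (2:ℕ)^2 = 4 := rfl
        rw [this]
        linear_combination (-w3) * hr + (-(w2*w3*(g (2^τ-2))^2)) * two0
      have m1 : g (2^(τ+1)-2) ∈ I (2^(τ+1)-1) := by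
        have := (gen_mem (2^(τ+1)-1)).2.1
        rwa [show 2^(τ+1)-1-1 = 2^(τ+1)-2 by omega] at this
      have m2 : w3 * (g (2^τ-2))^2 ∈ I (2^(τ+1)-1) := by
        have p1 : (2:ℕ) ≤ 2^τ := by
          calc (2:ℕ) = 2^1 := rfl
          _ ≤ 2^τ := Nat.pow_le_pow_right (by norm_num) (by omega)
        have p2 : 2^(τ+1) = 2*2^τ := by rw [pow_succ]; ring
        rw [show w3 * (g (2^τ-2))^2 = g (2*(2^τ-2)+3) from (dbl2 _).symm,
          show 2*(2^τ-2)+3 = 2^(τ+1)-1 by omega]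
        exact (gen_mem _).2.2
      rw [e]
      exact Ideal.add_mem _ (Ideal.mul_mem_left _ _ m1) (Ideal.mul_mem_left _ _ m2)
    · -- k = K+3 ≥ 3
      intro _ hτ
      set k := K+3 with hk
      have wA := ih (k-2) (by omega) (by omega) (by omega)
      have wB := ih (k-1) (by omega) (by omega) (by omega)
      -- HP instance
      have hpi := hp (τ+1-k) (k-2) (by omega)
      rw [show τ+1-k+2 = τ+3-k by omega, show τ+1-k+1 = τ+2-k by omega,
        show k-2+1 = k-1 by omega, show k-2+2 = k by omega] at hpi
      -- rearranged: w3^(2^(k-1)) * X^(2^k) = A + w2^(2^(k-2)) * B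
      have hpr : w3^(2^(k-1)) * (g (2^(τ+1-k)-2))^(2^k)
          = (g (2^(τ+3-k)-2))^(2^(k-2))
            + w2^(2^(k-2)) * (g (2^(τ+2-k)-2))^(2^(k-1)) := by
        linear_combination (-1 : R2) * hpi + (-(w2^(2^(k-2)) * (g (2^(τ+2-k)-2))^(2^(k-1)))) * two0
      have pk : (2:ℕ)^k = 2*2^(k-1) := by
        have := pow_succ' 2 (k-1)
        rwa [show (k-1)+1 = k by omega] at this
      have pk1 : (2:ℕ)^(k-1) = 2*2^(k-2) := by
        have := pow_succ' 2 (k-2)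
        rwa [show (k-2)+1 = k-1 by omega] at this
      have pk2 : (1:ℕ) ≤ 2^(k-2) := Nat.one_le_two_pow
      have e : w3^(2^k-1) * (g (2^(τ+1-k)-2))^(2^k)
          = w3^(2^(k-2)) * (w3^(2^(k-2)-1) * (g (2^(τ+3-k)-2))^(2^(k-2)))
            + w2^(2^(k-2)) * (w3^(2^(k-1)-1) * (g (2^(τ+2-k)-2))^(2^(k-1))) := by
        have s1 : 2^k-1 = (2^(k-1)-1) + 2^(k-1) := by omega
        rw [s1, pow_add]
        calc w3^(2^(k-1)-1) * w3^(2^(k-1)) * (g (2^(τ+1-k)-2))^(2^k)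
            = w3^(2^(k-1)-1) * (w3^(2^(k-1)) * (g (2^(τ+1-k)-2))^(2^k)) := by ring
          _ = w3^(2^(k-1)-1) * ((g (2^(τ+3-k)-2))^(2^(k-2))
              + w2^(2^(k-2)) * (g (2^(τ+2-k)-2))^(2^(k-1))) := by rw [hpr]
          _ = _ := by
              have s2 : 2^(k-1)-1 = 2^(k-2) + (2^(k-2)-1) := by omega
              rw [s2, pow_add]; ring
      rw [e]
      rw [show τ+3-k = τ+1-(k-2) by omega, show τ+2-k = τ+1-(k-1) by omega]
      exact Ideal.add_mem _ (Ideal.mul_mem_left _ _ wA) (Ideal.mul_mem_left _ _ wB)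

def r : ℕ → R2
  | 0 => 0
  | 1 => 0
  | 2 => 0
  | 3 => w3
  | (τ+4) => w3 * (w2 * (r (τ+3))^2 + (g (2^(τ+2)-2))^4)

lemma rrec (τ : ℕ) (hτ : 3 ≤ τ) :
    r (τ+1) = w3 * (w2 * (r τ)^2 + (g (2^(τ-1)-2))^4) := by
  obtain ⟨m, rfl⟩ : ∃ m, τ = m+3 := ⟨τ-3, by omega⟩
  show r (m+4) = _
  rw [show r (m+4) = w3 * (w2 * (r (m+3))^2 + (g (2^(m+2)-2))^4) from rfl,
    show m+3-1 = m+2 by omega]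

lemma RL : ∀ τ, 3 ≤ τ → g (2^τ-2) = w2^(2^(τ-1)-1) + w3 * r τ := by
  intro τ
  induction τ with
  | zero => omega
  | succ τ ihτ =>
    intro hτ
    rcases Nat.lt_or_ge τ 3 with h3 | h3
    · -- τ+1 = 3
      have : τ = 2 := by omega
      subst this
      show g 6 = w2^(2^2-1) + w3 * r 3
      rw [g6, show r 3 = w3 from rfl]
      norm_num
      ring
    · have ih := ihτ h3
      have hr := hrec (τ-1) (by omega)
      rw [show τ-1+2 = τ+1 by omega, show τ-1+1 = τ by omega] at hr
      have hrr := rrec τ h3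
      have p1 : (2:ℕ) ≤ 2^(τ-1) := by
        calc (2:ℕ) = 2^1 := rfl
        _ ≤ 2^(τ-1) := Nat.pow_le_pow_right (by norm_num) (by omega)
      have p2 : 2^τ = 2*2^(τ-1) := by
        have := pow_succ' 2 (τ-1)
        rwa [show (τ-1)+1 = τ by omega] at this
      have psq : (w2^(2^(τ-1)-1))^2 = w2^(2^τ-2) := by
        rw [← pow_mul]
        congr 1
        omega
      rw [hr, ih, CharTwo.add_sq, psq, hrr,
        show τ+1-1 = τ from rfl]
      have e3 : w2^(2^τ-1) = w2 * w2^(2^τ-2) := by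
        rw [← pow_succ']
        congr 1
        omega
      rw [e3]
      ring

def u (τ : ℕ) : R2 := if τ ≤ 2 then 0 else
  w2^(2^(τ-1)-1)*w3^(2^τ-3) + w2^(2^τ-2)*w3*(r τ)^2 + w2^(2^τ-3)*w3*(g (2^(τ-1)-2))^4

lemma u2 : u 2 = 0 := rfl

lemma udef (τ : ℕ) (hτ : 3 ≤ τ) : u τ =
    w2^(2^(τ-1)-1)*w3^(2^τ-3) + w2^(2^τ-2)*w3*(r τ)^2 + w2^(2^τ-3)*w3*(g (2^(τ-1)-2))^4 := by
  rw [u, if_neg (by omega)]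

/-- V = w3 * u -/
lemma VU (τ : ℕ) (hτ : 2 ≤ τ) :
    w2^(2^(τ+1)-4) + w2^(2^(τ-1)-1)*w3^(2^τ-2) + w2^(2^τ-3)*g (2^(τ+1)-2) = w3 * u τ := by
  rcases Nat.lt_or_ge τ 3 with h3 | h3
  · have : τ = 2 := by omega
    subst this
    show w2^(2^3-4) + w2^(2^1-1)*w3^(2^2-2) + w2^(2^2-3)*g 6 = w3 * u 2
    rw [g6, u2]
    norm_num
    linear_combination (w2^4 + w2*w3^2) * two0
  · have hr := hrec (τ-1) (by omega)
    rw [show τ-1+2 = τ+1 by omega, show τ-1+1 = τ by omega] at hr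
    have hrl := RL τ h3
    have p1 : (4:ℕ) ≤ 2^(τ-1) := by
      calc (4:ℕ) = 2^2 := rfl
      _ ≤ 2^(τ-1) := Nat.pow_le_pow_right (by norm_num) (by omega)
    have p2 : 2^τ = 2*2^(τ-1) := by
      have := pow_succ' 2 (τ-1)
      rwa [show (τ-1)+1 = τ by omega] at this
    have p3 : 2^(τ+1) = 4*2^(τ-1) := by rw [pow_succ, p2]; ring
    obtain ⟨M, hM⟩ : ∃ M, 2^(τ-1) = M+4 := ⟨2^(τ-1)-4, by omega⟩
    rw [udef τ h3, hr, hrl, CharTwo.add_sq]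
    rw [show (2:ℕ)^(τ+1)-4 = 4*M+12 by omega, show 2^(τ-1)-1 = M+3 by omega,
      show 2^τ-2 = 2*M+6 by omega, show 2^τ-3 = 2*M+5 by omega,
      show (w2^(M+3))^2 = w2^(2*M+6) by rw [← pow_mul]; congr 1; omega]
    linear_combination (w2^(4*M+12)) * two0

lemma urec (τ : ℕ) (hτ : 4 ≤ τ) : u τ = w2^4*w3*(u (τ-1))^2
    + (w2^(2^(τ-1)+2)*w3^(2^τ-5) + w2^(2^(τ-1)-1)*w3^(2^τ-3)
       + w2^(2^τ-3)*w3*(g (2^(τ-1)-2))^4) := by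
  obtain ⟨M, hM⟩ : ∃ M, 2^(τ-2) = M+4 := ⟨2^(τ-2)-4, by
    have : (4:ℕ) ≤ 2^(τ-2) := by
      calc (4:ℕ) = 2^2 := rfl
      _ ≤ 2^(τ-2) := Nat.pow_le_pow_right (by norm_num) (by omega)
    omega⟩
  have p2 : 2^(τ-1) = 2*2^(τ-2) := by
    have := pow_succ' 2 (τ-2); rwa [show (τ-2)+1 = τ-1 by omega] at this
  have p3 : 2^τ = 2*2^(τ-1) := by
    have := pow_succ' 2 (τ-1); rwa [show (τ-1)+1 = τ by omega] at this
  have h1 : (r τ)^2 = w3^2*(w2^2*(r (τ-1))^4 + (g (2^(τ-2)-2))^8) := by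
    have hr := rrec (τ-1) (by omega)
    rw [show τ-1+1 = τ by omega, show τ-1-1 = τ-2 by omega] at hr
    rw [hr, mul_pow, CharTwo.add_sq, mul_pow]
    ring
  have h2 := udef (τ-1) (by omega)
  rw [show τ-1-1 = τ-2 by omega] at h2
  rw [udef τ (by omega), h1, h2, CharTwo.add_sq, CharTwo.add_sq]
  rw [show 2^(τ-1)-1 = 2*M+7 by omega, show 2^τ-3 = 4*M+13 by omega,
    show 2^τ-2 = 4*M+14 by omega, show 2^(τ-2)-1 = M+3 by omega,
    show 2^(τ-1)-3 = 2*M+5 by omega, show 2^(τ-1)-2 = 2*M+6 by omega,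
    show 2^(τ-1)+2 = 2*M+10 by omega, show 2^τ-5 = 4*M+11 by omega,
    show 2^(τ-2)-2 = M+2 by omega]
  linear_combination (-(w2^(2*M+10)*w3^(4*M+11))) * two0

lemma chain (τ : ℕ) (hτ : 4 ≤ τ) : ∀ d k, 1 ≤ k → k + d = τ-2 →
    w2^(2^(τ-1)-1)*w3^(2^τ-3)
      + w2^(2^τ-2^k-1)*w3^(2^(k+1)-3)*(g (2^(τ-k)-2))^(2^(k+1)) ∈ I (2^(τ+1)-1) := by
  intro d
  induction d with
  | zero =>
    intro k _ hk
    have hkk : k = τ-2 := by omega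
    subst hkk
    obtain ⟨M, hM⟩ : ∃ M, 2^(τ-2) = M+4 := ⟨2^(τ-2)-4, by
      have : (4:ℕ) ≤ 2^(τ-2) := by
        calc (4:ℕ) = 2^2 := rfl
        _ ≤ 2^(τ-2) := Nat.pow_le_pow_right (by norm_num) (by omega)
      omega⟩
    have p2 : 2^(τ-1) = 2*2^(τ-2) := by
      have := pow_succ' 2 (τ-2); rwa [show (τ-2)+1 = τ-1 by omega] at this
    have p3 : 2^τ = 2*2^(τ-1) := by
      have := pow_succ' 2 (τ-1); rwa [show (τ-1)+1 = τ by omega] at this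
    have hw := wc τ (τ-2) (by omega) (by omega)
    rw [show τ+1-(τ-2) = 3 by omega] at hw
    have hmem := Ideal.mul_mem_left _ (w2^(2^(τ-1)-1)*w3^(2^(τ-2)-2)) hw
    have heq : w2^(2^(τ-1)-1)*w3^(2^(τ-2)-2)
          * (w3^(2^(τ-2)-1) * (g (2^3-2))^(2^(τ-2)))
        = w2^(2^(τ-1)-1)*w3^(2^τ-3)
          + w2^(2^τ-2^(τ-2)-1)*w3^(2^(τ-2+1)-3)*(g (2^(τ-(τ-2))-2))^(2^(τ-2+1)) := by
      rw [show (2:ℕ)^3-2 = 6 by norm_num, g6, add_pow_char_pow,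
        show τ-(τ-2) = 2 by omega, show (2:ℕ)^2-2 = 2 by norm_num, g2,
        show τ-2+1 = τ-1 by omega]
      rw [show 2^(τ-1)-1 = 2*M+7 by omega, show 2^(τ-2)-2 = M+2 by omega,
        show 2^(τ-2)-1 = M+3 by omega, show 2^τ-3 = 4*M+13 by omega,
        show 2^τ-2^(τ-2)-1 = 3*M+11 by omega, show 2^(τ-1)-3 = 2*M+5 by omega,
        hM, p2, hM]
      rw [← pow_mul, ← pow_mul]
      ring
    rwa [heq] at hmem
  | succ d ih =>
    intro k hk1 hkd
    have hk3 : k + 1 + d = τ-2 := by omega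
    have ihh := ih (k+1) (by omega) hk3
    have hpi := hp (τ-k-1) k (by omega)
    rw [show τ-k-1+2 = τ-k+1 by omega, show τ-k-1+1 = τ-k by omega] at hpi
    obtain ⟨M, hM⟩ : ∃ M, 2^k = M+2 := ⟨2^k-2, by
      have : (2:ℕ) ≤ 2^k := by
        calc (2:ℕ) = 2^1 := rfl
        _ ≤ 2^k := Nat.pow_le_pow_right (by norm_num) hk1
      omega⟩
    have pk1 : (2:ℕ)^(k+1) = 2*M+4 := by rw [pow_succ]; omega
    have pk2 : (2:ℕ)^(k+2) = 4*M+8 := by rw [pow_succ, pow_succ]; omega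
    obtain ⟨c, hc⟩ : ∃ c, 2^τ = c + (4*M+8) := ⟨2^τ-(4*M+8), by
      have h1 : 2^(k+2) ≤ 2^τ := Nat.pow_le_pow_right (by norm_num) (by omega)
      omega⟩
    -- normalize ihh
    rw [show k+1+1 = k+2 from rfl] at ihh
    rw [show (2:ℕ)^(k+2)-3 = 4*M+5 by omega,
      show 2^τ-2^(k+1)-1 = c+2*M+3 by omega, pk2,
      show τ-(k+1) = τ-k-1 by omega] at ihh
    -- normalize hpi
    rw [pk2, pk1, hM] at hpi
    have hpr : w3^(2*M+4)*(g (2^(τ-k-1)-2))^(4*M+8)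
        = (g (2^(τ-k+1)-2))^(M+2) + w2^(M+2)*(g (2^(τ-k)-2))^(2*M+4) := by
      linear_combination (-1 : R2) * hpi
        + (-(w2^(M+2)*(g (2^(τ-k)-2))^(2*M+4))) * two0
    -- emission
    have hw := wc τ k hk1 (by omega)
    rw [show 2^k-1 = M+1 by omega, hM, show τ+1-k = τ-k+1 by omega] at hw
    have emem := Ideal.mul_mem_left _ (w2^(c+2*M+3)*w3^M) hw
    -- normalize goal
    rw [show 2^τ-2^k-1 = c+3*M+5 by omega, show 2^(k+1)-3 = 2*M+1 by omega, pk1]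
    have goalEq : w2^(2^(τ-1)-1)*w3^(2^τ-3)
          + w2^(c+3*M+5)*w3^(2*M+1)*(g (2^(τ-k)-2))^(2*M+4)
        = w2^(c+2*M+3)*w3^M * (w3^(M+1)*(g (2^(τ-k+1)-2))^(M+2))
          + (w2^(2^(τ-1)-1)*w3^(2^τ-3)
             + w2^(c+2*M+3)*w3^(4*M+5)*(g (2^(τ-k-1)-2))^(4*M+8)) := by
      linear_combination (-(w2^(c+2*M+3)*w3^(2*M+1))) * hpr
        + (-(w2^(c+2*M+3)*w3^(2*M+1)*(g (2^(τ-k+1)-2))^(M+2))) * two0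
    rw [goalEq]
    exact Ideal.add_mem _ emem ihh

lemma S0 : ∀ τ, 2 ≤ τ → u τ ∈ I (2^(τ+1)-1) := by
  intro τ
  induction τ using Nat.strong_induction_on with
  | _ τ ih =>
    intro hτ
    rcases Nat.lt_or_ge τ 4 with h4 | h4
    · rcases Nat.lt_or_ge τ 3 with h3 | h3
      · -- τ = 2
        have : τ = 2 := by omega
        subst this
        rw [u2]
        exact (I _).zero_mem
      · -- τ = 3
        have : τ = 3 := by omega
        subst this
        have w1 := wc 3 1 (by norm_num) (by norm_num)
        have w2' := wc 3 2 (by norm_num) (by norm_num)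
        norm_num at w1 w2'
        have heq : u 3 = w2^3 * (w3 * (g 6)^2) + w2^2 * (w3^3 * (g 2)^4) := by
          rw [udef 3 (by norm_num), g6, g2,
            show r 3 = w3 from rfl, show (3:ℕ)-1 = 2 by norm_num,
            show (2:ℕ)^(2)-2 = 2 by norm_num, g2]
          norm_num
          rw [CharTwo.add_sq]
          ring
        rw [heq]
        exact Ideal.add_mem _ (Ideal.mul_mem_left _ _ w1) (Ideal.mul_mem_left _ _ w2')
    · -- τ ≥ 4
      have ihm := ih (τ-1) (by omega) (by omega)
      rw [show τ-1+1 = τ by omega] at ihm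
      have hf : w3 * (u (τ-1))^2 ∈ I (2^(τ+1)-1) := fro2 (by omega) ihm
      have m1mem : w2^(2^(τ-1)+2)*w3^(2^τ-5) ∈ I (2^(τ+1)-1) := by
        have hw := wc τ (τ-1) (by omega) (by omega)
        rw [show τ+1-(τ-1) = 2 by omega, show (2:ℕ)^2-2 = 2 by norm_num, g2] at hw
        have hmem := Ideal.mul_mem_left _ (w2^2*w3^(2^(τ-1)-4)) hw
        have p2 : 2^τ = 2*2^(τ-1) := by
          have := pow_succ' 2 (τ-1); rwa [show (τ-1)+1 = τ by omega] at this
        have p4 : (8:ℕ) ≤ 2^(τ-1) := by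
          calc (8:ℕ) = 2^3 := rfl
          _ ≤ 2^(τ-1) := Nat.pow_le_pow_right (by norm_num) (by omega)
        obtain ⟨M, hM⟩ : ∃ M, 2^(τ-1) = M+8 := ⟨2^(τ-1)-8, by omega⟩
        rw [show 2^(τ-1)-4 = M+4 by omega, show 2^(τ-1)-1 = M+7 by omega,
          hM] at hmem
        rw [show 2^(τ-1)+2 = M+10 by omega, show 2^τ-5 = 2*M+11 by omega]
        have heq : w2^2*w3^(M+4) * (w3^(M+7) * w2^(M+8)) = w2^(M+10)*w3^(2*M+11) := by
          ring
        rwa [heq] at hmem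
      have m23mem := chain τ h4 (τ-3) 1 (by norm_num) (by omega)
      rw [show (2:ℕ)^1 = 2 from rfl, show (1:ℕ)+1 = 2 from rfl,
        show (2:ℕ)^2-3 = 1 by norm_num, show (2:ℕ)^2 = 4 from rfl,
        show τ-1 = τ-1 from rfl, pow_one] at m23mem
      have p2 : (4:ℕ) ≤ 2^τ := by
        calc (4:ℕ) = 2^2 := rfl
        _ ≤ 2^τ := Nat.pow_le_pow_right (by norm_num) (by omega)
      rw [show 2^τ-2-1 = 2^τ-3 by omega] at m23mem
      rw [urec τ h4]
      refine Ideal.add_mem _ (by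
        have e5 : w2^4*w3*(u (τ-1))^2 = w2^4*(w3*(u (τ-1))^2) := by ring
        rw [e5]
        exact Ideal.mul_mem_left _ _ hf) ?_
      rw [show w2^(2^(τ-1)+2)*w3^(2^τ-5) + w2^(2^(τ-1)-1)*w3^(2^τ-3)
          + w2^(2^τ-3)*w3*(g (2^(τ-1)-2))^4
        = w2^(2^(τ-1)+2)*w3^(2^τ-5) + (w2^(2^(τ-1)-1)*w3^(2^τ-3)
          + w2^(2^τ-3)*w3*(g (2^(τ-1)-2))^4) by ring]
      exact Ideal.add_mem _ m1mem m23mem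

lemma base (t : ℕ) (ht : 3 ≤ t) : ∃ q ∈ I (2^(t+1)-2),
    w2^(2^(t+1)-7) + w2^(2^(t-1)-1)*w3^(2^t-4) + w2^(2^t-5)*g (2^(t+1)-4) = w3*q := by
  obtain ⟨τ, rfl⟩ : ∃ τ, t = τ+1 := ⟨t-1, by omega⟩
  have hτ : 2 ≤ τ := by omega
  refine ⟨w2*w3*(u τ)^2, ?_, ?_⟩
  · have hu := S0 τ hτ
    have hfro := fro (n := 2^(τ+1)-1) (by
      have : (4:ℕ) ≤ 2^(τ+1) := by
        calc (4:ℕ) = 2^2 := rfl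
        _ ≤ 2^(τ+1) := Nat.pow_le_pow_right (by norm_num) (by omega)
      omega) hu
    have e : 2*(2^(τ+1)-1) = 2^(τ+1+1)-2 := by
      have e2 : 2^(τ+1+1) = 2*2^(τ+1) := by rw [pow_succ]; ring
      have : (1:ℕ) ≤ 2^(τ+1) := Nat.one_le_two_pow
      omega
    rw [e] at hfro
    have e3 : w2*w3*(u τ)^2 = w2*(w3*(u τ)^2) := by ring
    rw [e3]
    exact Ideal.mul_mem_left _ _ hfro
  · have hVU := VU τ hτ
    have hz := gzero (τ-1)
    rw [show τ-1+2 = τ+1 by omega] at hz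
    have p1 : (4:ℕ) ≤ 2^(τ+1) := by
      calc (4:ℕ) = 2^2 := rfl
      _ ≤ 2^(τ+1) := Nat.pow_le_pow_right (by norm_num) (by omega)
    have p2 : 2^(τ+1+1) = 2*2^(τ+1) := by rw [pow_succ]; ring
    have hd := dbl1 (2^(τ+1)-3)
    rw [show 2*(2^(τ+1)-3)+2 = 2^(τ+1+1)-4 by omega,
      show 2^(τ+1)-3+1 = 2^(τ+1)-2 by omega, hz] at hd
    obtain ⟨M, hM⟩ : ∃ M, 2^(τ-1) = M+2 := ⟨2^(τ-1)-2, by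
      have : (2:ℕ) ≤ 2^(τ-1) := by
        calc (2:ℕ) = 2^1 := rfl
        _ ≤ 2^(τ-1) := Nat.pow_le_pow_right (by norm_num) (by omega)
      omega⟩
    have q2 : 2^τ = 2*M+4 := by
      have := pow_succ' 2 (τ-1)
      rw [show (τ-1)+1 = τ by omega] at this
      omega
    have q3 : 2^(τ+1) = 4*M+8 := by rw [pow_succ]; omega
    have q4 : 2^(τ+1+1) = 8*M+16 := by omega
    -- rewrite the VU identity exponents
    rw [show 2^(τ+1)-4 = 4*M+4 by omega, show 2^(τ-1)-1 = M+1 by omega,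
      show 2^τ-2 = 2*M+2 by omega, show 2^τ-3 = 2*M+1 by omega] at hVU
    rw [hd]
    have q5 : (2:ℕ)^(τ+1-1) = 2*M+4 := by
      rw [show τ+1-1 = τ from rfl]; omega
    rw [show 2^(τ+1+1)-7 = 8*M+9 by omega, show 2^(τ+1-1)-1 = 2*M+3 by omega,
      show 2^(τ+1)-4 = 4*M+4 by omega, show 2^(τ+1)-5 = 4*M+3 by omega]
    have key : w2^(8*M+9) + w2^(2*M+3)*w3^(4*M+4)
          + w2^(4*M+3)*((g (2^(τ+1)-2))^2 + w2 * (0:R2)^2)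
        = w2*(w2^(4*M+4) + w2^(M+1)*w3^(2*M+2) + w2^(2*M+1)*g (2^(τ+1)-2))^2 := by
      rw [CharTwo.add_sq, CharTwo.add_sq]
      ring
    rw [key, hVU]
    rw [mul_pow]
    ring

theorem thm_4_7' (s t : ℕ) (hs : 1 ≤ s) (hst : s ≤ t - 2) :
    ∃ q ∈ I (2 ^ (t + 1) - 2 ^ s),
      w2 ^ (2 ^ (t + 1) - 3 * 2 ^ s - 1)
        + w2 ^ (2 ^ (t - 1) - 1) * w3 ^ (2 ^ t - 2 ^ (s + 1))
        + w2 ^ (2 ^ t - 2 ^ (s + 1) - 2 ^ (s - 1)) * g (2 ^ (t + 1) - 2 ^ s - 2)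
        = w3 * q := by
  have hst' : s + 2 ≤ t := by omega
  clear hst
  obtain ⟨σ, rfl⟩ : ∃ σ, s = σ+1 := ⟨s-1, by omega⟩
  clear hs
  induction σ generalizing t with
  | zero =>
    have ht : 3 ≤ t := by omega
    have c0 : (2:ℕ)^(0+1) = 2 := rfl
    have c1 : (2:ℕ)^(0+1+1) = 4 := rfl
    have c2 : (2:ℕ)^(0+1-1) = 1 := rfl
    have c3 : 2^(t+1) = 2*2^t := by rw [pow_succ]; ring
    have c4 : (8:ℕ) ≤ 2^t := by
      calc (8:ℕ) = 2^3 := rfl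
      _ ≤ 2^t := Nat.pow_le_pow_right (by norm_num) (by omega)
    obtain ⟨q, hqm, hqe⟩ := base t ht
    refine ⟨q, ?_, ?_⟩
    · rw [show 2^(t+1)-2^(0+1) = 2^(t+1)-2 by omega]
      exact hqm
    · rw [show 2^(t+1)-3*2^(0+1)-1 = 2^(t+1)-7 by omega,
        show 2^t-2^(0+1+1)-2^(0+1-1) = 2^t-5 by omega,
        show 2^t-2^(0+1+1) = 2^t-4 by omega,
        show 2^(t+1)-2^(0+1)-2 = 2^(t+1)-4 by omega]
      exact hqe
  | succ σ ih =>
    have ht : σ+4 ≤ t := by omega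
    obtain ⟨f, hf⟩ : ∃ f, 2^σ = f+1 := ⟨2^σ-1, by
      have := Nat.one_le_two_pow (n := σ); omega⟩
    have P2 : 2^(σ+1) = 2*f+2 := by rw [pow_succ]; omega
    have P3 : 2^(σ+1+1) = 4*f+4 := by rw [pow_succ]; omega
    have P4 : 2^(σ+1+1+1) = 8*f+8 := by rw [pow_succ, P3]; ring
    obtain ⟨e, he⟩ : ∃ e, 2^(t-2) = e+4*f+4 := by
      have h1 : 2^(σ+1+1) ≤ 2^(t-2) := Nat.pow_le_pow_right (by norm_num) (by omega)
      rw [P3] at h1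
      exact ⟨2^(t-2)-(4*f+4), by omega⟩
    have P6 : 2^(t-1) = 2*e+8*f+8 := by
      have := pow_succ' 2 (t-2)
      rw [show (t-2)+1 = t-1 by omega] at this
      omega
    have P7 : 2^t = 4*e+16*f+16 := by
      have := pow_succ' 2 (t-1)
      rw [show (t-1)+1 = t by omega] at this
      omega
    have P8 : 2^(t+1) = 8*e+32*f+32 := by rw [pow_succ]; omega
    -- IH instance at t-1
    have ihh := ih (t-1) (by omega)
    rw [show t-1+1 = t by omega, show t-1-1 = t-2 by omega,
      show σ+1-1 = σ from rfl] at ihh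
    obtain ⟨q₀, hq₀m, hq₀e⟩ := ihh
    rw [show 2^t-2^(σ+1) = 4*e+14*f+14 by omega] at hq₀m
    rw [show 2^t-3*2^(σ+1)-1 = 4*e+10*f+9 by omega,
      show 2^(t-2)-1 = e+4*f+3 by omega,
      show 2^(t-1)-2^(σ+1+1)-2^σ = 2*e+3*f+3 by omega,
      show 2^(t-1)-2^(σ+1+1) = 2*e+4*f+4 by omega,
      show 2^t-2^(σ+1)-2 = 4*e+14*f+12 by omega] at hq₀e
    -- membership part 1
    have hfro := fro (n := 4*e+14*f+14) (by omega) hq₀m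
    rw [show 2*(4*e+14*f+14) = 8*e+28*f+28 by ring] at hfro
    -- membership part 2 : down then up
    have hz := gzero (t-3)
    rw [show t-3+2 = t-1 by omega, show 2^(t-1)-3 = 2*e+8*f+5 by omega] at hz
    have hdown := down (n := 8*e+28*f+28) (by omega) (2*e+2*f+3) (2*e+8*f+5)
      (by omega) (by rw [hz]; simpa using (I _).zero_mem)
    rw [show 2*e+8*f+5+(2*e+2*f+3) = 4*e+10*f+8 by omega] at hdown
    have hup := up (n := 8*e+28*f+28) (by omega) (2*e+3*f+3) (2*e+7*f+5)
      (by omega) (by rw [show 2*e+7*f+5+(2*e+3*f+3) = 4*e+10*f+8 by omega]; exact hdown)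
    rw [show 2*(2*e+3*f+3) = 4*e+6*f+6 by ring] at hup
    -- assemble witness
    refine ⟨w2*(w3*q₀^2) + w3*w2^(4*e+6*f+6)*(g (2*e+7*f+5))^4, ?_, ?_⟩
    · rw [show 2^(t+1)-2^(σ+1+1) = 8*e+28*f+28 by omega]
      exact Ideal.add_mem _ (Ideal.mul_mem_left _ _ hfro) hup
    · -- the identity
      rw [show σ+1+1-1 = σ+1 from rfl]
      rw [show 2^(t+1)-3*2^(σ+1+1)-1 = 8*e+20*f+19 by omega,
        show 2^(t-1)-1 = 2*e+8*f+7 by omega,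
        show 2^t-2^(σ+1+1+1)-2^(σ+1) = 4*e+6*f+6 by omega,
        show 2^t-2^(σ+1+1+1) = 4*e+8*f+8 by omega,
        show 2^(t+1)-2^(σ+1+1)-2 = 8*e+28*f+26 by omega]
      have hdE := dbl1 (4*e+14*f+12)
      rw [show 2*(4*e+14*f+12)+2 = 8*e+28*f+26 by ring,
        show 4*e+14*f+12+1 = 4*e+14*f+13 by ring] at hdE
      have hdm := dbl2 (2*e+7*f+5)
      rw [show 2*(2*e+7*f+5)+3 = 4*e+14*f+13 by ring] at hdm
      have hsq2 : w3^2*q₀^2 = w2^(8*e+20*f+18) + w2^(2*e+8*f+6)*w3^(4*e+8*f+8)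
          + w2^(4*e+6*f+6)*(g (4*e+14*f+12))^2 := by
        rw [show w3^2*q₀^2 = (w3*q₀)^2 by ring, ← hq₀e, CharTwo.add_sq, CharTwo.add_sq]
        rw [mul_pow, mul_pow]
        rw [← pow_mul, ← pow_mul, ← pow_mul, ← pow_mul]
        rw [show (4*e+10*f+9)*2 = 8*e+20*f+18 by ring,
          show (e+4*f+3)*2 = 2*e+8*f+6 by ring,
          show (2*e+4*f+4)*2 = 4*e+8*f+8 by ring,
          show (2*e+3*f+3)*2 = 4*e+6*f+6 by ring]
      rw [hdE, hdm]
      linear_combination (-w2) * hsq2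

/-- Theorem 4.7: for `1 ≤ s ≤ t - 2`,
`w₂^{2^{t+1}-3·2^s-1} + w₂^{2^{t-1}-1} w₃^{2^t-2^{s+1}} + w₂^{2^t-2^{s+1}-2^{s-1}} g_{2^{t+1}-2^s-2}`
belongs to `w₃I_{2^{t+1}-2^s}`. -/
theorem thm_4_7 (s t : ℕ) (hs : 1 ≤ s) (hst : s ≤ t - 2) :
    ∃ q ∈ I (2 ^ (t + 1) - 2 ^ s),
      w2 ^ (2 ^ (t + 1) - 3 * 2 ^ s - 1)
        + w2 ^ (2 ^ (t - 1) - 1) * w3 ^ (2 ^ t - 2 ^ (s + 1))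
        + w2 ^ (2 ^ t - 2 ^ (s + 1) - 2 ^ (s - 1)) * g (2 ^ (t + 1) - 2 ^ s - 2)
        = w3 * q := thm_4_7' s t hs hst

end
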